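/- Let ψ be an Orlicz function satisfying the Δ²-condition, let c ≥ 1, and let φ : 𝔹_N → 𝔹_N be holomorphic. Then ψ⁻¹(1/(1−|φ(z)|)^c) / ψ⁻¹(1/(1−|z|)^c) → 0 as |z| → 1 if and only if ψ⁻¹(1/(1−|φ(z)|)) / ψ⁻¹(1/(1−|z|)) → 0 as |z| → 1. -/

import Mathlib

/-!
The `Δ²`-condition `ψ(x)² ≤ ψ(Cx)`, read at `x = ψ⁻¹(t)`, gives `ψ⁻¹(t²) ≤ C ψ⁻¹(t)`; iterating
and using monotonicity, `ψ⁻¹(t^c) = O(ψ⁻¹(t))` as `t → ∞`, for every `c`. Put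
`a = 1/(1-|φ(z)|) ≥ 1` and `b = 1/(1-|z|) → ∞`. The two conditions say `ψ⁻¹(a^c) = o(ψ⁻¹(b^c))`
and `ψ⁻¹(a) = o(ψ⁻¹(b))`. The first implies the second because `ψ⁻¹(a) ≤ ψ⁻¹(a^c)` and
`ψ⁻¹(b^c) = O(ψ⁻¹(b))`. Conversely `ψ⁻¹(a^c) ≤ K ψ⁻¹(a) + M` for all `a ≥ 0` (the `O`-bound above
some `t₀`, monotonicity below it), while `M = o(ψ⁻¹(b))` since `ψ⁻¹(b) → ∞`, and
`ψ⁻¹(b) ≤ ψ⁻¹(b^c)`.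
-/

open Set Filter

/-- An Orlicz function: a strictly convex function `psi : [0,oo) -> [0,oo)` with `psi 0 = 0`,
`psi` continuous at `0`, and `psi x / x -> oo` as `x -> oo`. -/
def OrliczFunction (ψ : ℝ → ℝ) : Prop :=
  StrictConvexOn ℝ (Ici 0) ψ ∧ (∀ x ∈ Ici (0:ℝ), 0 ≤ ψ x) ∧ ψ 0 = 0 ∧
    ContinuousWithinAt ψ (Ici 0) 0 ∧ Tendsto (fun x => ψ x / x) atTop atTop

/-- `ψinv` is the inverse of the Orlicz function `ψ`, viewed as an increasing bijection
of `[0,oo)` onto itself. -/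
def OrliczInverse (ψ ψinv : ℝ → ℝ) : Prop :=
  (∀ x, 0 ≤ x → ψinv (ψ x) = x) ∧ (∀ y, 0 ≤ y → ψ (ψinv y) = y) ∧ (∀ y, 0 ≤ y → 0 ≤ ψinv y)

/-- The nabla_0-condition. -/
def Nabla0 (ψ : ℝ → ℝ) : Prop :=
  ∀ B > (1:ℝ), ∃ C ≥ (1:ℝ), ∃ x₀ > (0:ℝ), ∀ x y : ℝ, x₀ ≤ x → x ≤ y →
    ψ (B * x) / ψ x ≤ ψ (C * B * y) / ψ y

/-- The uniform nabla_0-condition. -/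
def UniformNabla0 (ψ : ℝ → ℝ) : Prop :=
  ∃ C ≥ (1:ℝ), ∀ B > (1:ℝ), ∃ x₀ > (0:ℝ), ∀ x y : ℝ, x₀ ≤ x → x ≤ y →
    ψ (B * x) / ψ x ≤ ψ (C * B * y) / ψ y

/-- The nabla_2-condition. -/
def Nabla2 (ψ : ℝ → ℝ) : Prop :=
  ∃ β > (1:ℝ), ∃ x₀ > (0:ℝ), ∀ x ≥ x₀, 2 * β * ψ x ≤ ψ (β * x)

/-- The Delta_2-condition. -/
def Delta2 (ψ : ℝ → ℝ) : Prop :=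
  ∃ K > (1:ℝ), ∃ x₀ > (0:ℝ), ∀ x ≥ x₀, ψ (2 * x) ≤ K * ψ x

/-- The Delta^2-condition. -/
def DeltaSquare (ψ : ℝ → ℝ) : Prop :=
  ∃ C > (0:ℝ), ∃ x₀ > (0:ℝ), ∀ x ≥ x₀, (ψ x) ^ 2 ≤ ψ (C * x)

open MeasureTheory Set Filter Metric

/-- The non-isotropic ball `S(ζ,h) = {z ∈ B_N : |1 − ⟨z,ζ⟩| < h}`, where
`⟨z,ζ⟩ = Σ zᵢ conj ζᵢ` is the Hermitian inner product (i.e. `⟪ζ, z⟫` in Mathlib's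
convention). -/
def nonisotropicBall (N : ℕ) (ζ : EuclideanSpace ℂ (Fin N)) (h : ℝ) :
    Set (EuclideanSpace ℂ (Fin N)) :=
  {z | ‖z‖ < 1 ∧ ‖(1 - (inner ℂ ζ z : ℂ))‖ < h}

/-- The weighted measure `(1−|z|²)^α dv` on the unit ball of `ℂ^N`. -/
noncomputable def wBergman (N : ℕ) [MeasurableSpace (EuclideanSpace ℂ (Fin N))]
    [BorelSpace (EuclideanSpace ℂ (Fin N))] (α : ℝ) :
    Measure (EuclideanSpace ℂ (Fin N)) :=
  (volume.restrict (Metric.ball 0 1)).withDensity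
    fun z => ENNReal.ofReal ((1 - ‖z‖ ^ 2) ^ α)

/-- The normalized weighted measure `v_α = c_α (1−|z|²)^α dv` on the unit ball of `ℂ^N`,
with `c_α` chosen so that `v_α(B_N) = 1`. -/
noncomputable def vBergman (N : ℕ) [MeasurableSpace (EuclideanSpace ℂ (Fin N))]
    [BorelSpace (EuclideanSpace ℂ (Fin N))] (α : ℝ) :
    Measure (EuclideanSpace ℂ (Fin N)) :=
  (wBergman N α Set.univ)⁻¹ • wBergman N α

open Asymptotics Topology

namespace OrliczFunction

variable {ψ : ℝ → ℝ}

lemma pos (hψ : OrliczFunction ψ) {y : ℝ} (hy : 0 < y) : 0 < ψ y := by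
  refine (hψ.2.1 y hy.le).lt_of_ne fun h => hy.ne ?_
  refine hψ.1.eq_of_isMinOn (fun z hz => ?_) (fun z hz => ?_) self_mem_Ici hy.le
  · simpa [hψ.2.2.1] using hψ.2.1 z hz
  · simpa [← h] using hψ.2.1 z hz

lemma strictMonoOn (hψ : OrliczFunction ψ) : StrictMonoOn ψ (Ici 0) := by
  intro u hu v hv huv
  rcases (show (0:ℝ) ≤ u from hu).eq_or_lt with rfl | hu0
  · rw [hψ.2.2.1]
    exact hψ.pos huv
  · have hψu : ψ 0 < ψ u := by rw [hψ.2.2.1]; exact hψ.pos hu0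
    refine hψ.1.convexOn.lt_right_of_left_lt self_mem_Ici hv ?_ hψu
    rw [openSegment_eq_Ioo (hu0.trans huv)]
    exact ⟨hu0, huv⟩

end OrliczFunction

namespace OrliczInverse

variable {ψ ψinv : ℝ → ℝ}

lemma nonneg (hinv : OrliczInverse ψ ψinv) {y : ℝ} (hy : 0 ≤ y) : 0 ≤ ψinv y :=
  hinv.2.2 y hy

lemma pos (hψ : OrliczFunction ψ) (hinv : OrliczInverse ψ ψinv) {y : ℝ} (hy : 0 < y) :
    0 < ψinv y := by
  refine (hinv.nonneg hy.le).lt_of_ne fun h => hy.ne ?_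
  rw [← hinv.2.1 y hy.le, ← h, hψ.2.2.1]

lemma monotoneOn (hψ : OrliczFunction ψ) (hinv : OrliczInverse ψ ψinv) :
    MonotoneOn ψinv (Ici 0) := by
  intro s hs t ht hst
  rwa [← hψ.strictMonoOn.le_iff_le (hinv.nonneg hs) (hinv.nonneg ht), hinv.2.1 s hs,
    hinv.2.1 t ht]

lemma tendsto_atTop (hψ : OrliczFunction ψ) (hinv : OrliczInverse ψ ψinv) :
    Tendsto ψinv atTop atTop := by
  refine tendsto_atTop_atTop.2 fun L => ⟨ψ (max L 0), fun t ht => ?_⟩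
  have hL : (0:ℝ) ≤ max L 0 := le_max_right L 0
  calc L ≤ max L 0 := le_max_left L 0
    _ = ψinv (ψ (max L 0)) := (hinv.1 _ hL).symm
    _ ≤ ψinv t := hinv.monotoneOn hψ (hψ.2.1 _ hL) ((hψ.2.1 _ hL).trans ht) ht

lemma isBigO_comp_sq (hψ : OrliczFunction ψ) (hinv : OrliczInverse ψ ψinv)
    (hΔ : DeltaSquare ψ) : (fun t => ψinv (t ^ 2)) =O[atTop] ψinv := by
  obtain ⟨C, hC, x₀, hx₀, hsq⟩ := hΔ
  refine IsBigO.of_bound C ?_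
  filter_upwards [eventually_ge_atTop (ψ x₀)] with t ht
  have ht0 : 0 ≤ t := (hψ.2.1 x₀ hx₀.le).trans ht
  have hx : x₀ ≤ ψinv t := by
    simpa only [hinv.1 x₀ hx₀.le] using hinv.monotoneOn hψ (hψ.2.1 x₀ hx₀.le) ht0 ht
  have hCx : 0 ≤ C * ψinv t := mul_nonneg hC.le (hinv.nonneg ht0)
  have hle : t ^ 2 ≤ ψ (C * ψinv t) := by simpa only [hinv.2.1 t ht0] using hsq _ hx
  rw [Real.norm_of_nonneg (hinv.nonneg (sq_nonneg t)), Real.norm_of_nonneg (hinv.nonneg ht0)]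
  calc ψinv (t ^ 2) ≤ ψinv (ψ (C * ψinv t)) :=
        hinv.monotoneOn hψ (sq_nonneg t) (hψ.2.1 _ hCx) hle
    _ = C * ψinv t := hinv.1 _ hCx

end OrliczInverse

section ComparisonFunction

variable {F : ℝ → ℝ}

lemma isBigO_comp_pow_two_pow (hF : (fun t => F (t ^ 2)) =O[atTop] F) (n : ℕ) :
    (fun t => F (t ^ 2 ^ n)) =O[atTop] F := by
  induction n with
  | zero => simpa using isBigO_refl F atTop
  | succ n ih =>
    have hsq := hF.comp_tendsto (tendsto_pow_atTop (pow_ne_zero n two_ne_zero))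
    simp only [Function.comp_def, ← pow_mul, ← pow_succ] at hsq
    exact hsq.trans ih

lemma isBigO_comp_rpow_of_isBigO_comp_sq (hmono : MonotoneOn F (Ici 0))
    (hnn : ∀ t, 0 ≤ t → 0 ≤ F t) (hF : (fun t => F (t ^ 2)) =O[atTop] F) (c : ℝ) :
    (fun t => F (t ^ c)) =O[atTop] F := by
  obtain ⟨n, hn⟩ := pow_unbounded_of_one_lt c one_lt_two
  refine IsBigO.trans (IsBigO.of_norm_eventuallyLE ?_) (isBigO_comp_pow_two_pow hF n)
  filter_upwards [eventually_ge_atTop 1] with t ht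
  have ht0 : (0:ℝ) ≤ t := zero_le_one.trans ht
  rw [Real.norm_of_nonneg (hnn _ (Real.rpow_nonneg ht0 c))]
  refine hmono (Real.rpow_nonneg ht0 c) (pow_nonneg ht0 _) ?_
  calc t ^ c ≤ t ^ ((2 ^ n : ℕ) : ℝ) :=
        Real.rpow_le_rpow_of_exponent_le ht (by exact_mod_cast hn.le)
    _ = t ^ 2 ^ n := Real.rpow_natCast t _

lemma exists_comp_rpow_le_mul_add (hmono : MonotoneOn F (Ici 0))
    (hnn : ∀ t, 0 ≤ t → 0 ≤ F t) {c : ℝ} (hc : 0 ≤ c) (hpow : (fun t => F (t ^ c)) =O[atTop] F) :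
    ∃ K M : ℝ, ∀ t, 0 ≤ t → F (t ^ c) ≤ K * F t + M := by
  obtain ⟨K, hK, hKO⟩ := hpow.exists_pos
  obtain ⟨t₀, ht₀⟩ := eventually_atTop.1 (hKO.bound.and (eventually_ge_atTop 0))
  have hM : 0 ≤ F (t₀ ^ c) := hnn _ (Real.rpow_nonneg (ht₀ t₀ le_rfl).2 c)
  refine ⟨K, F (t₀ ^ c), fun t ht => ?_⟩
  rcases le_total t₀ t with h | h
  · have hb := (ht₀ t h).1
    rw [Real.norm_of_nonneg (hnn _ (Real.rpow_nonneg ht c)), Real.norm_of_nonneg (hnn t ht)] at hb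
    linarith
  · have hle := hmono (Real.rpow_nonneg ht c) (Real.rpow_nonneg (ht.trans h) c)
      (Real.rpow_le_rpow ht h hc)
    linarith [mul_nonneg hK.le (hnn t ht)]

theorem isLittleO_comp_rpow_iff {X : Type*} {l : Filter X} {f g : X → ℝ} {c : ℝ}
    (hmono : MonotoneOn F (Ici 0)) (hnn : ∀ t, 0 ≤ t → 0 ≤ F t)
    (htop : Tendsto F atTop atTop) (hc : 1 ≤ c) (hpow : (fun t => F (t ^ c)) =O[atTop] F)
    (hf : ∀ᶠ x in l, 1 ≤ f x) (hg : Tendsto g l atTop) :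
    (fun x => F (f x ^ c)) =o[l] (fun x => F (g x ^ c)) ↔ (F ∘ f) =o[l] (F ∘ g) := by
  have hle_rpow : ∀ {u : X → ℝ}, (∀ᶠ x in l, 1 ≤ u x) →
      (F ∘ u) =O[l] fun x => F (u x ^ c) := by
    intro u hu
    refine IsBigO.of_norm_eventuallyLE (hu.mono fun x hx => ?_)
    have hx0 : 0 ≤ u x := zero_le_one.trans hx
    dsimp only [Function.comp_apply]
    rw [Real.norm_of_nonneg (hnn _ hx0)]
    exact hmono hx0 (Real.rpow_nonneg hx0 c) (Real.self_le_rpow_of_one_le hx hc)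
  constructor
  · intro h
    exact (hle_rpow hf).trans_isLittleO (h.trans_isBigO (hpow.comp_tendsto hg))
  · intro h
    obtain ⟨K, M, hKM⟩ := exists_comp_rpow_le_mul_add hmono hnn (by linarith) hpow
    have hM : (fun _ => M) =o[l] (F ∘ g) :=
      isLittleO_const_left.2 (Or.inr (tendsto_norm_atTop_atTop.comp (htop.comp hg)))
    have hbound : (fun x => F (f x ^ c)) =O[l] fun x => K * (F ∘ f) x + M := by
      refine IsBigO.of_norm_eventuallyLE (hf.mono fun x hx => ?_)
      have hx0 : 0 ≤ f x := zero_le_one.trans hx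
      dsimp only [Function.comp_apply]
      rw [Real.norm_of_nonneg (hnn _ (Real.rpow_nonneg hx0 c))]
      exact hKM _ hx0
    exact hbound.trans_isLittleO
      (((h.const_mul_left K).add hM).trans_isBigO (hle_rpow (hg.eventually_ge_atTop 1)))

end ComparisonFunction

lemma tendsto_nhds_zero_iff_of_nonneg {X : Type*} {l : Filter X} {u : X → ℝ}
    (hu : ∀ᶠ x in l, 0 ≤ u x) :
    Tendsto u l (𝓝 0) ↔ ∀ ε > 0, ∀ᶠ x in l, u x < ε := by
  rw [tendsto_order]
  exact and_iff_right fun a ha => hu.mono fun x hx => ha.trans_le hx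

lemma eventually_comap_norm_nhdsLT_one_iff {E : Type*} [SeminormedAddGroup E] {p : E → Prop} :
    (∀ᶠ z in comap (norm : E → ℝ) (𝓝[<] 1), p z) ↔
      ∃ r ∈ Ioo (0:ℝ) 1, ∀ z : E, ‖z‖ < 1 → r < ‖z‖ → p z := by
  rw [eventually_comap, (nhdsLT_basis (1:ℝ)).eventually_iff]
  constructor
  · rintro ⟨r, hr, h⟩
    exact ⟨max r (1 / 2), ⟨by positivity, max_lt hr (by norm_num)⟩,
      fun z hz hrz => h ⟨(le_max_left _ _).trans_lt hrz, hz⟩ z rfl⟩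
  · rintro ⟨r, hr, h⟩
    exact ⟨r, hr.2, fun s hs z hz => h z (hz ▸ hs.2) (hz ▸ hs.1)⟩

lemma eventually_norm_lt_one_comap_norm_nhdsLT_one {E : Type*} [SeminormedAddGroup E] :
    ∀ᶠ z in comap (norm : E → ℝ) (𝓝[<] 1), ‖z‖ < 1 :=
  eventually_comap.2 (eventually_nhdsWithin_of_forall fun _ hs _ hz => hz ▸ hs)

lemma tendsto_one_div_one_sub_norm_comap_norm_nhdsLT_one {E : Type*} [SeminormedAddGroup E] :
    Tendsto (fun z : E => 1 / (1 - ‖z‖)) (comap norm (𝓝[<] 1)) atTop := by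
  have h : Tendsto (fun s : ℝ => 1 - s) (𝓝[<] 1) (𝓝[>] 0) := by
    refine tendsto_nhdsWithin_iff.2
      ⟨?_, eventually_nhdsWithin_of_forall fun s hs => sub_pos.2 (mem_Iio.1 hs)⟩
    have := ((continuous_sub_left (1:ℝ)).tendsto 1).mono_left (nhdsWithin_le_nhds (s := Iio 1))
    rwa [sub_self] at this
  simpa only [one_div, Function.comp_def] using
    tendsto_inv_nhdsGT_zero.comp (h.comp tendsto_comap)

lemma isLittleO_comap_norm_nhdsLT_one_iff {E : Type*} [SeminormedAddGroup E] {u v : E → ℝ}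
    (hu : ∀ z, ‖z‖ < 1 → 0 ≤ u z) (hv : ∀ z, ‖z‖ < 1 → 0 < v z) :
    u =o[comap (norm : E → ℝ) (𝓝[<] 1)] v ↔
      ∀ ε > (0:ℝ), ∃ r ∈ Ioo (0:ℝ) 1, ∀ z : E, ‖z‖ < 1 → r < ‖z‖ →
        u z / v z < ε := by
  have hball := eventually_norm_lt_one_comap_norm_nhdsLT_one (E := E)
  simp_rw [← eventually_comap_norm_nhdsLT_one_iff]
  rw [isLittleO_iff_tendsto' (hball.mono fun z hz hvz => absurd hvz (hv z hz).ne'),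
    tendsto_nhds_zero_iff_of_nonneg (hball.mono fun z hz => div_nonneg (hu z hz) (hv z hz).le)]

theorem stmt15_general (N : ℕ)
    (ψ ψinv : ℝ → ℝ) (hψ : OrliczFunction ψ) (hinv : OrliczInverse ψ ψinv)
    (hΔ : DeltaSquare ψ) (c : ℝ) (hc : 1 ≤ c)
    (φ : EuclideanSpace ℂ (Fin N) → EuclideanSpace ℂ (Fin N))
    (hφm : MapsTo φ (Metric.ball 0 1) (Metric.ball 0 1)) :
    (∀ ε > (0:ℝ), ∃ r ∈ Ioo (0:ℝ) 1, ∀ z : EuclideanSpace ℂ (Fin N), ‖z‖ < 1 → r < ‖z‖ →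
        ψinv (1 / (1 - ‖φ z‖) ^ c) / ψinv (1 / (1 - ‖z‖) ^ c) < ε) ↔
    (∀ ε > (0:ℝ), ∃ r ∈ Ioo (0:ℝ) 1, ∀ z : EuclideanSpace ℂ (Fin N), ‖z‖ < 1 → r < ‖z‖ →
        ψinv (1 / (1 - ‖φ z‖)) / ψinv (1 / (1 - ‖z‖)) < ε) := by
  have hφz : ∀ z, ‖z‖ < 1 → ‖φ z‖ < 1 := fun z hz =>
    mem_ball_zero_iff.1 (hφm (mem_ball_zero_iff.2 hz))
  have hpos : ∀ {a : ℝ}, a < 1 → 0 < 1 / (1 - a) := fun ha => one_div_pos.2 (sub_pos.2 ha)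
  have hpos_rpow : ∀ {a : ℝ}, a < 1 → 0 < 1 / (1 - a) ^ c := fun ha =>
    one_div_pos.2 (Real.rpow_pos_of_pos (sub_pos.2 ha) c)
  rw [← isLittleO_comap_norm_nhdsLT_one_iff (fun z hz => hinv.nonneg (hpos_rpow (hφz z hz)).le)
      (fun z hz => hinv.pos hψ (hpos_rpow hz)),
    ← isLittleO_comap_norm_nhdsLT_one_iff (fun z hz => hinv.nonneg (hpos (hφz z hz)).le)
      (fun z hz => hinv.pos hψ (hpos hz))]
  have hball := eventually_norm_lt_one_comap_norm_nhdsLT_one (E := EuclideanSpace ℂ (Fin N))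
  have hrpow : ∀ {a : ℝ}, a < 1 → 1 / (1 - a) ^ c = (1 / (1 - a)) ^ c := fun ha => by
    rw [Real.div_rpow zero_le_one (sub_pos.2 ha).le, Real.one_rpow]
  rw [isLittleO_congr (hball.mono fun z hz => congrArg ψinv (hrpow (hφz z hz)))
    (hball.mono fun z hz => congrArg ψinv (hrpow hz))]
  exact isLittleO_comp_rpow_iff (hinv.monotoneOn hψ) (fun _ => hinv.nonneg)
    (hinv.tendsto_atTop hψ) hc
    (isBigO_comp_rpow_of_isBigO_comp_sq (hinv.monotoneOn hψ) (fun _ => hinv.nonneg)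
      (hinv.isBigO_comp_sq hψ hΔ) c)
    (hball.mono fun z hz => (one_le_one_div (sub_pos.2 (hφz z hz)) (by simp)))
    tendsto_one_div_one_sub_norm_comap_norm_nhdsLT_one

/-- if `ψ` is an Orlicz function satisfying the `Δ²`-condition, `c ≥ 1`, and
`φ : B_N → B_N` is holomorphic, then
`ψ⁻¹(1/(1−|φ z|)^c)/ψ⁻¹(1/(1−|z|)^c) → 0` as `|z| → 1` iff
`ψ⁻¹(1/(1−|φ z|))/ψ⁻¹(1/(1−|z|)) → 0` as `|z| → 1`. -/
theorem stmt15 (N : ℕ) (hN : 1 ≤ N)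
    (ψ ψinv : ℝ → ℝ) (hψ : OrliczFunction ψ) (hinv : OrliczInverse ψ ψinv)
    (hΔ : DeltaSquare ψ) (c : ℝ) (hc : 1 ≤ c)
    (φ : EuclideanSpace ℂ (Fin N) → EuclideanSpace ℂ (Fin N))
    (hφd : DifferentiableOn ℂ φ (Metric.ball 0 1))
    (hφm : MapsTo φ (Metric.ball 0 1) (Metric.ball 0 1)) :
    (∀ ε > (0:ℝ), ∃ r ∈ Ioo (0:ℝ) 1, ∀ z : EuclideanSpace ℂ (Fin N), ‖z‖ < 1 → r < ‖z‖ →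
        ψinv (1 / (1 - ‖φ z‖) ^ c) / ψinv (1 / (1 - ‖z‖) ^ c) < ε) ↔
    (∀ ε > (0:ℝ), ∃ r ∈ Ioo (0:ℝ) 1, ∀ z : EuclideanSpace ℂ (Fin N), ‖z‖ < 1 → r < ‖z‖ →
        ψinv (1 / (1 - ‖φ z‖)) / ψinv (1 / (1 - ‖z‖)) < ε) :=
  stmt15_general N ψ ψinv hψ hinv hΔ c hc φ hφm
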